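/- If f = h + conj(g) ∈ W⁰_H(α) and p = q ≥ 2, then the partial sum s_{p,p}(f) = s_p(h) + conj(s_p(g)) satisfies the W⁰_H(α) condition on the disk |z| < 1/2; in particular for p = q = 2, Re((s₂(h) + ε s₂(g))'(z) + αz(s₂(h) + ε s₂(g))''(z)) > 0 for all |ε| = 1 and |z| < 1/2. -/

import Mathlib

/-!
Write `L u = u' + α z u''`. On power series `L` acts coefficientwise,
`L (∑ cₙ zⁿ) = ∑ (n + 1) (1 + α n) cₙ₊₁ zⁿ`, so it commutes with taking sections, and the claim is
`‖B‖ < Re A` for the `p`-th sections `A`, `B` of `L h`, `L g`. Choosing `‖ε‖ = 1` with `ε B = ‖B‖`,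
this is the positivity of the real part of the section of `Φ = L h - ε L g`, a function with
positive real part on the unit disk.

On a circle `‖ζ‖ = ρ < 1`, the circle average of `ζ⁻ⁿ Φ(ζ)` is the `n`-th coefficient of `Φ`, and
that of `ζⁿ Φ(ζ)` vanishes for `n ≥ 1`. Hence the section `∑_{n<p} cₙ zⁿ` is the average of `Φ`
against the real kernel `2 Re ∑_{n<p} wⁿ - 1`, `w = z / ζ`, which is positive for `‖w‖ < 1/2`
because `(2 ∑_{n<p} wⁿ - 1)(1 - w) = 1 + w - 2 wᵖ`. Taking `ρ = ‖z‖ + 1/2` finishes the proof.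
-/

open Complex Finset Metric FormalMultilinearSeries Real
open scoped ENNReal NNReal ComplexConjugate

theorem hasFPowerSeriesOnBall_ofScalars_of_hasSum {c : ℕ → ℂ} {f : ℂ → ℂ} {R : ℝ≥0}
    (hR : 0 < R) (hf : ∀ z ∈ ball (0 : ℂ) R, HasSum (fun n => c n * z ^ n) (f z)) :
    HasFPowerSeriesOnBall f (ofScalars ℂ c) 0 R where
  r_le := by
    refine ENNReal.le_of_forall_nnreal_lt fun r hr => ?_
    have hrR : (r : ℝ) < R := by exact_mod_cast hr
    have hsum := (hf r (by simpa [abs_of_nonneg r.2] using hrR)).summable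
    refine (ofScalars ℂ c).le_radius_of_tendsto (l := 0) ?_
    simpa [ofScalars_norm] using (hsum.tendsto_atTop_zero).norm
  r_pos := by exact_mod_cast hR
  hasSum {z} hz := by
    rw [Metric.eball_coe] at hz
    simpa [ofScalars_apply_eq, mul_comm] using hf z hz

theorem HasFPowerSeriesOnBall.deriv_ofScalars {c : ℕ → ℂ} {f : ℂ → ℂ} {r : ℝ≥0∞}
    (hf : HasFPowerSeriesOnBall f (ofScalars ℂ c) 0 r) :
    HasFPowerSeriesOnBall (deriv f) (ofScalars ℂ fun n => (n + 1) * c (n + 1)) 0 r := by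
  convert (ContinuousLinearMap.apply ℂ ℂ (1 : ℂ)).comp_hasFPowerSeriesOnBall hf.fderiv using 1
  · rfl
  · ext n : 1
    ext
    simp [apply_eq_prod_smul_coeff, derivSeries_coeff_one]

theorem HasFPowerSeriesOnBall.hasSum_deriv_add_mul_deriv_deriv {c : ℕ → ℂ} {f : ℂ → ℂ}
    {r : ℝ≥0∞} (hf : HasFPowerSeriesOnBall f (ofScalars ℂ c) 0 r) (β : ℂ) {z : ℂ}
    (hz : z ∈ eball 0 r) :
    HasSum (fun n => (n + 1) * (1 + β * n) * c (n + 1) * z ^ n)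
      (deriv f z + β * z * deriv (deriv f) z) := by
  have hf' := hf.deriv_ofScalars
  have h1 : HasSum (fun n => (n + 1) * c (n + 1) * z ^ n) (deriv f z) := by
    simpa [ofScalars_apply_eq, mul_comm] using hf'.hasSum hz
  have h2 : HasSum (fun n => (n + 1) * ((n + 1 + 1) * c (n + 1 + 1)) * z ^ n)
      (deriv (deriv f) z) := by
    simpa [ofScalars_apply_eq, mul_comm] using hf'.deriv_ofScalars.hasSum hz
  have h3 : HasSum (fun n => β * n * (n + 1) * c (n + 1) * z ^ n) (β * z * deriv (deriv f) z) := by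
    have hshift : HasSum (fun n : ℕ => β * ↑(n + 1) * (↑(n + 1) + 1) * c (n + 1 + 1) * z ^ (n + 1))
        (β * z * deriv (deriv f) z) := by
      refine (h2.mul_left (β * z)).congr_fun fun n => ?_
      push_cast
      ring
    simpa using
      (hasSum_nat_add_iff (f := fun n : ℕ => β * n * (n + 1) * c (n + 1) * z ^ n) 1).1 hshift
  refine (h1.add h3).congr_fun fun n => ?_
  ring

theorem hasSum_deriv_add_mul_deriv_deriv_of_hasSum {c : ℕ → ℂ} {f : ℂ → ℂ}
    (hf : ∀ z ∈ ball (0 : ℂ) 1, HasSum (fun n => c n * z ^ n) (f z)) (β : ℂ) {z : ℂ}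
    (hz : z ∈ ball (0 : ℂ) 1) :
    HasSum (fun n => (n + 1) * (1 + β * n) * c (n + 1) * z ^ n)
      (deriv f z + β * z * deriv (deriv f) z) :=
  (hasFPowerSeriesOnBall_ofScalars_of_hasSum one_pos (by simpa using hf))
    |>.hasSum_deriv_add_mul_deriv_deriv β (by rw [Metric.eball_coe]; simpa using hz)

theorem deriv_add_mul_deriv_deriv_sum_Icc (d : ℕ → ℂ) (p : ℕ) (β z : ℂ) :
    deriv (fun w => ∑ n ∈ Icc 1 p, d n * w ^ n) z
        + β * z * deriv (deriv fun w => ∑ n ∈ Icc 1 p, d n * w ^ n) z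
      = ∑ n ∈ range p, (n + 1) * (1 + β * n) * d (n + 1) * z ^ n := by
  set e : ℕ → ℂ := fun n => if n ∈ Icc 1 p then d n else 0 with he
  have hpoly : ∀ w, HasSum (fun n => e n * w ^ n) (∑ n ∈ Icc 1 p, d n * w ^ n) := fun w => by
    have := hasSum_sum_of_ne_finset_zero (L := .unconditional ℕ) (f := fun n => e n * w ^ n)
      (s := Icc 1 p)
      fun n hn => by simp only [he, if_neg hn, zero_mul]
    convert this using 1
    exact sum_congr rfl fun n hn => by simp only [he, if_pos hn]
  have hR : (0 : ℝ≥0) < ‖z‖₊ + 1 := by positivity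
  have hz : z ∈ ball (0 : ℂ) (‖z‖₊ + 1 : ℝ≥0) := by simp
  have hL := (hasFPowerSeriesOnBall_ofScalars_of_hasSum hR fun w _ => hpoly w)
    |>.hasSum_deriv_add_mul_deriv_deriv β (by rwa [Metric.eball_coe])
  have hmem : ∀ n, n + 1 ∈ Icc 1 p ↔ n ∈ range p := fun n => by simp
  refine hL.unique ?_
  have := hasSum_sum_of_ne_finset_zero (L := .unconditional ℕ)
    (f := fun n : ℕ => (n + 1) * (1 + β * n) * e (n + 1) * z ^ n) (s := range p)
    fun n hn => by simp only [he, if_neg (mt (hmem n).1 hn), mul_zero, zero_mul]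
  convert this using 1
  exact sum_congr rfl fun n hn => by simp only [he, if_pos ((hmem n).2 hn)]

theorem circleAverage_pos_of_continuousOn {f : ℂ → ℝ} {c : ℂ} {R : ℝ} (hR : 0 < R)
    (hf : ContinuousOn f (sphere c R)) (hpos : ∀ ζ ∈ sphere c R, 0 < f ζ) :
    0 < circleAverage f c R := by
  obtain ⟨ζ₀, hζ₀, hmin⟩ :=
    (isCompact_sphere c R).exists_isMinOn (NormedSpace.sphere_nonempty.2 hR.le) hf
  calc 0 < f ζ₀ := hpos ζ₀ hζ₀
    _ = circleAverage (fun _ => f ζ₀) c R := (circleAverage_const _ c R).symm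
    _ ≤ circleAverage f c R := by
      refine circleAverage_mono (circleIntegrable_const _ c R) (hf.circleIntegrable hR.le)
        fun ζ hζ => hmin ?_
      rwa [abs_of_pos hR] at hζ

section CircleAverage

variable {c : ℕ → ℂ} {Φ : ℂ → ℂ} {ρ : ℝ}

theorem circleAverage_inv_pow_mul_eq_coeff (hΦ : HasFPowerSeriesOnBall Φ (ofScalars ℂ c) 0 1)
    (hρ0 : 0 < ρ) (hρ1 : ρ < 1) (n : ℕ) :
    circleAverage (fun ζ => ζ⁻¹ ^ n * Φ ζ) 0 ρ = c n := by
  lift ρ to ℝ≥0 using hρ0.le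
  have hd : DifferentiableOn ℂ Φ (closedBall 0 ρ) := by
    refine hΦ.differentiableOn.mono ?_
    rw [← ENNReal.coe_one, Metric.eball_coe]
    exact closedBall_subset_ball (by exact_mod_cast hρ1)
  have hseries := hΦ.hasFPowerSeriesAt.eq_formalMultilinearSeries
    (hd.hasFPowerSeriesOnBall (by exact_mod_cast hρ0)).hasFPowerSeriesAt
  have hcoeff := congrArg (fun q => q n fun _ => 1) hseries
  simp only [ofScalars_apply_eq, cauchyPowerSeries_apply] at hcoeff
  rw [circleAverage_eq_circleIntegral (by positivity)]
  simpa [smul_eq_mul, mul_comm, mul_left_comm, mul_assoc] using hcoeff.symm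

theorem circleAverage_pow_mul_eq_zero (hΦ : DifferentiableOn ℂ Φ (ball 0 1)) (hρ : |ρ| < 1)
    {n : ℕ} (hn : n ≠ 0) : circleAverage (fun ζ => ζ ^ n * Φ ζ) 0 ρ = 0 := by
  rw [DiffContOnCl.circleAverage (((differentiableOn_pow n).fun_mul hΦ).diffContOnCl_ball
    (closedBall_subset_ball hρ))]
  simp [hn]

end CircleAverage

def partialSumKernel (p : ℕ) (w : ℂ) : ℝ := 2 * (∑ n ∈ range p, w ^ n).re - 1

theorem partialSumKernel_pos {w : ℂ} (hw : ‖w‖ < 1 / 2) {p : ℕ} (hp : 2 ≤ p) :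
    0 < partialSumKernel p w := by
  set S := ∑ n ∈ range p, w ^ n
  have hfactor : (2 * S - 1) * (1 - w) = 1 + w - 2 * w ^ p := by
    linear_combination (-2 : ℂ) * geom_sum_mul w p
  have hre : (2 * S.re - 1) * normSq (1 - w) = 1 - ‖w‖ ^ 2 - (2 * w ^ p * conj (1 - w)).re :=
    calc (2 * S.re - 1) * normSq (1 - w) = ((2 * S - 1) * (1 - w) * conj (1 - w)).re := by
          rw [mul_assoc, mul_conj, re_mul_ofReal]; simp
      _ = 1 - ‖w‖ ^ 2 - (2 * w ^ p * conj (1 - w)).re := by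
          rw [hfactor, sub_mul, sub_re, Complex.sq_norm, normSq_apply]
          simp [mul_re]
          ring
  have hbound : (2 * w ^ p * conj (1 - w)).re ≤ 2 * ‖w‖ ^ 2 * (1 + ‖w‖) := by
    refine (re_le_norm _).trans ?_
    have hpow : ‖w‖ ^ p ≤ ‖w‖ ^ 2 := pow_le_pow_of_le_one (norm_nonneg w) (by linarith) hp
    have hsub : ‖1 - w‖ ≤ 1 + ‖w‖ := (norm_sub_le 1 w).trans (by simp)
    rw [norm_mul, norm_mul, norm_pow, RCLike.norm_conj, RCLike.norm_two]
    gcongr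
  have hprod : 0 < (2 * S.re - 1) * normSq (1 - w) := by
    rw [hre]
    nlinarith [norm_nonneg w]
  exact pos_of_mul_pos_left hprod (normSq_nonneg _)

theorem circleAverage_partialSumKernel_mul {c : ℕ → ℂ} {Φ : ℂ → ℂ}
    (hΦ : HasFPowerSeriesOnBall Φ (ofScalars ℂ c) 0 1) {ρ : ℝ} (hρ0 : 0 < ρ) (hρ1 : ρ < 1)
    {p : ℕ} (hp : p ≠ 0) (z : ℂ) :
    circleAverage (fun ζ => (partialSumKernel p (z * ζ⁻¹) : ℂ) * Φ ζ) 0 ρ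
      = ∑ n ∈ range p, c n * z ^ n := by
  have hdiff : DifferentiableOn ℂ Φ (ball 0 1) := by
    simpa [← ENNReal.coe_one, Metric.eball_coe] using hΦ.differentiableOn
  have hsphere : sphere (0 : ℂ) ρ ⊆ ball 0 1 :=
    sphere_subset_closedBall.trans (closedBall_subset_ball hρ1)
  have hne : ∀ ζ ∈ sphere (0 : ℂ) ρ, ζ ≠ 0 := fun ζ hζ => ne_zero_of_mem_sphere hρ0.ne' ⟨ζ, hζ⟩
  -- On the circle `conj ζ⁻¹ = ζ / ρ ^ 2`, so the kernel becomes a Laurent polynomial in `ζ`.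
  have hexpand : Set.EqOn (fun ζ => (partialSumKernel p (z * ζ⁻¹) : ℂ) * Φ ζ)
      (fun ζ => ∑ n ∈ range p, z ^ n • (ζ⁻¹ ^ n * Φ ζ)
        + ∑ n ∈ range p, (conj z / ρ ^ 2) ^ n • (ζ ^ n * Φ ζ) - Φ ζ) (sphere 0 |ρ|) := by
    intro ζ hζ
    rw [abs_of_pos hρ0] at hζ
    have hconj : conj ζ⁻¹ = ζ / ρ ^ 2 := by
      rw [map_inv₀, inv_eq_iff_eq_inv, inv_div, eq_div_iff (hne ζ hζ), mul_comm, mul_conj,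
        normSq_eq_norm_sq, mem_sphere_zero_iff_norm.1 hζ]
      push_cast; ring
    have hK : (partialSumKernel p (z * ζ⁻¹) : ℂ)
        = ∑ n ∈ range p, (z * ζ⁻¹) ^ n + conj (∑ n ∈ range p, (z * ζ⁻¹) ^ n) - 1 := by
      rw [add_conj]; simp [partialSumKernel]
    simp only [hK, map_sum, map_pow, map_mul, hconj, sub_mul, add_mul, sum_mul, one_mul,
      smul_eq_mul]
    congr 2 <;> refine sum_congr rfl fun n _ => by ring
  have hΦc : ContinuousOn Φ (sphere 0 ρ) := hdiff.continuousOn.mono hsphere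
  have hinv : ContinuousOn (·⁻¹) (sphere (0 : ℂ) ρ) := continuousOn_inv₀.mono hne
  have hint : ∀ g : ℂ → ℂ, ContinuousOn g (sphere 0 ρ) → CircleIntegrable g 0 ρ :=
    fun g hg => hg.circleIntegrable hρ0.le
  have hconjSum : ∑ n ∈ range p, circleAverage (fun ζ => (conj z / ρ ^ 2) ^ n • (ζ ^ n * Φ ζ)) 0 ρ
      = circleAverage Φ 0 ρ := by
    rw [sum_eq_single_of_mem 0 (by simpa [Nat.pos_iff_ne_zero]) fun n _ hn => by
      rw [circleAverage_fun_smul, circleAverage_pow_mul_eq_zero hdiff (by rwa [abs_of_pos hρ0]) hn,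
        smul_zero]]
    simp
  rw [circleAverage_congr_sphere hexpand,
    circleAverage_fun_sub (hint _ (by fun_prop)) (hint _ hΦc),
    circleAverage_fun_add (hint _ (by fun_prop)) (hint _ (by fun_prop)),
    circleAverage_fun_sum fun n _ => hint _ (by fun_prop),
    circleAverage_fun_sum fun n _ => hint _ (by fun_prop), hconjSum, add_sub_cancel_right]
  refine sum_congr rfl fun n _ => ?_
  rw [circleAverage_fun_smul, circleAverage_inv_pow_mul_eq_coeff hΦ hρ0 hρ1, smul_eq_mul, mul_comm]

theorem re_sum_range_pos_of_re_pos {c : ℕ → ℂ} {Φ : ℂ → ℂ}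
    (hΦ : ∀ ζ ∈ ball (0 : ℂ) 1, HasSum (fun n => c n * ζ ^ n) (Φ ζ))
    (hpos : ∀ ζ ∈ ball (0 : ℂ) 1, 0 < (Φ ζ).re) {p : ℕ} (hp : 2 ≤ p) {z : ℂ}
    (hz : ‖z‖ < 1 / 2) : 0 < (∑ n ∈ range p, c n * z ^ n).re := by
  have hseries : HasFPowerSeriesOnBall Φ (ofScalars ℂ c) 0 1 := by
    simpa using hasFPowerSeriesOnBall_ofScalars_of_hasSum one_pos (by simpa using hΦ)
  have hdiff : DifferentiableOn ℂ Φ (ball 0 1) := by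
    simpa [← ENNReal.coe_one, Metric.eball_coe] using hseries.differentiableOn
  obtain ⟨ρ, hρ0, hρ1, hzρ⟩ : ∃ ρ : ℝ, 0 < ρ ∧ ρ < 1 ∧ ‖z‖ < ρ / 2 :=
    ⟨‖z‖ + 1 / 2, by positivity, by linarith, by linarith⟩
  have hsphere : sphere (0 : ℂ) ρ ⊆ ball 0 1 :=
    sphere_subset_closedBall.trans (closedBall_subset_ball hρ1)
  have hne : ∀ ζ ∈ sphere (0 : ℂ) ρ, ζ ≠ 0 := fun ζ hζ => ne_zero_of_mem_sphere hρ0.ne' ⟨ζ, hζ⟩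
  have hKpos : ∀ ζ ∈ sphere (0 : ℂ) ρ, 0 < partialSumKernel p (z * ζ⁻¹) := by
    intro ζ hζ
    refine partialSumKernel_pos ?_ hp
    rw [norm_mul, norm_inv, mem_sphere_zero_iff_norm.1 hζ, ← div_eq_mul_inv, div_lt_iff₀ hρ0]
    linarith
  have hinv : ContinuousOn (·⁻¹) (sphere (0 : ℂ) ρ) := continuousOn_inv₀.mono hne
  have hΦc : ContinuousOn Φ (sphere 0 ρ) := hdiff.continuousOn.mono hsphere
  have hre : circleAverage (fun ζ => partialSumKernel p (z * ζ⁻¹) * (Φ ζ).re) 0 ρ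
      = (∑ n ∈ range p, c n * z ^ n).re := by
    rw [← circleAverage_partialSumKernel_mul hseries hρ0 hρ1 (by omega), ← reCLM_apply,
      ← reCLM.circleAverage_comp_comm]
    · congr 1
      funext ζ
      simp
    · exact ContinuousOn.circleIntegrable hρ0.le (by unfold partialSumKernel; fun_prop)
  rw [← hre]
  exact circleAverage_pos_of_continuousOn hρ0 (by unfold partialSumKernel; fun_prop)
    fun ζ hζ => mul_pos (hKpos ζ hζ) (hpos ζ (hsphere hζ))

theorem re_sub_mul_pos_of_norm_lt {u v ε : ℂ} (hε : ‖ε‖ = 1) (h : ‖v‖ < u.re) :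
    0 < (u - ε * v).re := by
  have hεv : (ε * v).re ≤ ‖v‖ := (re_le_norm _).trans_eq (by rw [norm_mul, hε, one_mul])
  rw [sub_re]
  linarith

theorem stmt_16_general (α : ℝ) (a b : ℕ → ℂ) (h g : ℂ → ℂ)
    (hrep : ∀ z ∈ Metric.ball (0 : ℂ) 1, HasSum (fun n => a n * z ^ n) (h z))
    (grep : ∀ z ∈ Metric.ball (0 : ℂ) 1, HasSum (fun n => b n * z ^ n) (g z))
    (hf : ∀ z ∈ Metric.ball (0 : ℂ) 1,
        ‖deriv g z + (α : ℂ) * z * deriv (deriv g) z‖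
          < (deriv h z + (α : ℂ) * z * deriv (deriv h) z).re)
    (p : ℕ) (hp : 2 ≤ p) :
    ∀ z : ℂ, ‖z‖ < 1 / 2 →
      ‖deriv (fun w : ℂ => ∑ n ∈ Finset.Icc 1 p, b n * w ^ n) z
          + (α : ℂ) * z *
            deriv (deriv (fun w : ℂ => ∑ n ∈ Finset.Icc 1 p, b n * w ^ n)) z‖
        < (deriv (fun w : ℂ => ∑ n ∈ Finset.Icc 1 p, a n * w ^ n) z
          + (α : ℂ) * z *
            deriv (deriv (fun w : ℂ => ∑ n ∈ Finset.Icc 1 p, a n * w ^ n)) z).re := by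
  intro z hz
  rw [deriv_add_mul_deriv_deriv_sum_Icc, deriv_add_mul_deriv_deriv_sum_Icc]
  set A := ∑ n ∈ range p, (n + 1) * (1 + α * n) * a (n + 1) * z ^ n
  set B := ∑ n ∈ range p, (n + 1) * (1 + α * n) * b (n + 1) * z ^ n
  obtain ⟨ε, hε, hεB⟩ := Complex.exists_norm_eq_mul_self B
  have hΦ : ∀ ζ ∈ ball (0 : ℂ) 1,
      HasSum (fun n => (n + 1) * (1 + α * n) * (a (n + 1) - ε * b (n + 1)) * ζ ^ n)
        ((deriv h ζ + α * ζ * deriv (deriv h) ζ) - ε * (deriv g ζ + α * ζ * deriv (deriv g) ζ)) :=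
    fun ζ hζ => ((hasSum_deriv_add_mul_deriv_deriv_of_hasSum hrep α hζ).sub
      ((hasSum_deriv_add_mul_deriv_deriv_of_hasSum grep α hζ).mul_left ε)).congr_fun
        fun n => by ring
  have hpos := re_sum_range_pos_of_re_pos hΦ
    (fun ζ hζ => re_sub_mul_pos_of_norm_lt hε (hf ζ hζ)) hp hz
  have hsplit : ∑ n ∈ range p, (n + 1) * (1 + α * n) * (a (n + 1) - ε * b (n + 1)) * z ^ n
      = A - ε * B := by
    rw [mul_sum, ← sum_sub_distrib]
    exact sum_congr rfl fun n _ => by ring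
  rw [hsplit, sub_re, ← hεB, ofReal_re] at hpos
  linarith

/-- for f ∈ W⁰_H(α) and p = q ≥ 2, the section
s_{p,p}(f) = s_p(h) + conj(s_p(g)) satisfies the W⁰_H(α) condition for |z| < 1/2. -/
theorem stmt_16 (α : ℝ) (hα : 0 ≤ α) (a b : ℕ → ℂ) (h g : ℂ → ℂ)
    (ha0 : a 0 = 0) (ha1 : a 1 = 1) (hb0 : b 0 = 0) (hb1 : b 1 = 0)
    (hrep : ∀ z ∈ Metric.ball (0 : ℂ) 1, HasSum (fun n => a n * z ^ n) (h z))
    (grep : ∀ z ∈ Metric.ball (0 : ℂ) 1, HasSum (fun n => b n * z ^ n) (g z))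
    (hf : ∀ z ∈ Metric.ball (0 : ℂ) 1,
        ‖deriv g z + (α : ℂ) * z * deriv (deriv g) z‖
          < (deriv h z + (α : ℂ) * z * deriv (deriv h) z).re)
    (p : ℕ) (hp : 2 ≤ p) :
    ∀ z : ℂ, ‖z‖ < 1 / 2 →
      ‖deriv (fun w : ℂ => ∑ n ∈ Finset.Icc 1 p, b n * w ^ n) z
          + (α : ℂ) * z *
            deriv (deriv (fun w : ℂ => ∑ n ∈ Finset.Icc 1 p, b n * w ^ n)) z‖
        < (deriv (fun w : ℂ => ∑ n ∈ Finset.Icc 1 p, a n * w ^ n) z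
          + (α : ℂ) * z *
            deriv (deriv (fun w : ℂ => ∑ n ∈ Finset.Icc 1 p, a n * w ^ n)) z).re :=
  stmt_16_general α a b h g hrep grep hf p hp
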